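/- Let L be symmetric p.s.d., Π an orthogonal projector preserving ker(L), S ∈ ℝ^{N×N} preserving both ker(L) and a subspace R, with RSA constant ε = sup_{x∈R,‖x‖_L=1}‖x−Πx‖_L. Then for x ∈ R and any k ≥ 1, ‖S^k x − (ΠSΠ)^k x‖_L ≤ ε ‖x‖_L (C_S + C_Π) Σ_{l=1}^{k} C̄_Π^{k−l} C_S^{l−1}, where C_S = ‖S‖_L, C_Π = ‖ΠS‖_L, C̄_Π = ‖ΠSΠ‖_L. -/

import Mathlib

/-!
Write `T = ΠSΠ`. For a matrix `M` preserving `ker L` one has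
`‖M y‖_L ≤ ‖L^{1/2} M L^{+1/2}‖ ‖y‖_L`: since `y - L⁺L y ∈ ker L`, we get
`L^{1/2} M y = (L^{1/2} M L^{+1/2}) (L^{+1/2} L y)`, and `L^{+1/2} L y` has Euclidean norm
`‖y‖_L`.
On `R` the one-step error splits as `S w - T w = (S w - Π S w) + Π S (w - Π w)`, so
`‖S w - T w‖_L ≤ ε (C_S + C_Π) ‖w‖_L`. Finally
`S^{k+1} x - T^{k+1} x = T (S^k x - T^k x) + (S - T) S^k x` with `S^k x ∈ R`, and induction on `k`
produces the sum `∑ C̄_Π^{k-1-l} C_S^l`.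
-/

open Matrix Finset

noncomputable section

/-- The positive semidefinite square root of a positive semidefinite matrix
(the definition `Matrix.PosSemidef.sqrt` of the older Mathlib, removed since). -/
def Matrix.PosSemidef.sqrt {n : Type*} [Fintype n] [DecidableEq n] {A : Matrix n n ℝ}
    (hA : A.PosSemidef) : Matrix n n ℝ :=
  hA.1.eigenvectorUnitary.1 * diagonal ((↑) ∘ (√·) ∘ hA.1.eigenvalues) *
  (star hA.1.eigenvectorUnitary : Matrix n n ℝ)

def IsMoorePenrose {N : ℕ} (L P : Matrix (Fin N) (Fin N) ℝ) : Prop :=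
  L * P * L = L ∧ P * L * P = P ∧ (L * P)ᵀ = L * P ∧ (P * L)ᵀ = P * L

def lnorm {M : ℕ} (L : Matrix (Fin M) (Fin M) ℝ) (x : Fin M → ℝ) : ℝ :=
  Real.sqrt (x ⬝ᵥ (L *ᵥ x))

def opNorm {M : ℕ} (B : Matrix (Fin M) (Fin M) ℝ) : ℝ :=
  ‖(Matrix.toEuclideanCLM (𝕜 := ℝ) (n := Fin M) B)‖

theorem pow_apply_le_of_forall_apply_le {R M : Type*} [Semiring R] [AddCommGroup M] [Module R M]
    (p : M → ℝ) {f : Module.End R M} {c : ℝ} (hc : 0 ≤ c) (hf : ∀ y, p (f y) ≤ c * p y)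
    (n : ℕ) (y : M) : p ((f ^ n) y) ≤ c ^ n * p y := by
  induction n with
  | zero => simp
  | succ n ih =>
    calc p ((f ^ (n + 1)) y) ≤ c * p ((f ^ n) y) := by
          rw [pow_succ', Module.End.mul_apply]; exact hf _
      _ ≤ c * (c ^ n * p y) := mul_le_mul_of_nonneg_left ih hc
      _ = c ^ (n + 1) * p y := by ring

section SeminormBounds

variable {R M F : Type*} [Semiring R] [AddCommGroup M] [Module R M]
  [FunLike F M ℝ] [AddGroupSeminormClass F M ℝ] (p : F)

theorem map_pow_apply_sub_pow_apply_le {S T : Module.End R M} {s : Set M}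
    (hs : Set.MapsTo S s s) {cS cT δ : ℝ} (hcS : 0 ≤ cS) (hcT : 0 ≤ cT) (hδ : 0 ≤ δ)
    (hS : ∀ y, p (S y) ≤ cS * p y) (hT : ∀ y, p (T y) ≤ cT * p y)
    (hST : ∀ w ∈ s, p (S w - T w) ≤ δ * p w) {x : M} (hx : x ∈ s) (k : ℕ) :
    p ((S ^ k) x - (T ^ k) x) ≤ δ * p x * ∑ l ∈ range k, cT ^ (k - 1 - l) * cS ^ l := by
  induction k with
  | zero => simp
  | succ k ih =>
    have hsplit : (S ^ (k + 1)) x - (T ^ (k + 1)) x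
        = T ((S ^ k) x - (T ^ k) x) + (S ((S ^ k) x) - T ((S ^ k) x)) := by
      rw [pow_succ', pow_succ', Module.End.mul_apply, Module.End.mul_apply, map_sub]
      abel
    have hmem : (S ^ k) x ∈ s := by
      rw [Module.End.pow_apply]; exact hs.iterate k hx
    have hsum := geom_sum₂_succ_eq cS cT (n := k)
    simp_rw [mul_comm (cS ^ _)] at hsum
    calc p ((S ^ (k + 1)) x - (T ^ (k + 1)) x)
        ≤ p (T ((S ^ k) x - (T ^ k) x)) + p (S ((S ^ k) x) - T ((S ^ k) x)) := by
          rw [hsplit]; exact map_add_le_add p _ _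
      _ ≤ cT * (δ * p x * ∑ l ∈ range k, cT ^ (k - 1 - l) * cS ^ l) + δ * (cS ^ k * p x) :=
          add_le_add ((hT _).trans (mul_le_mul_of_nonneg_left ih hcT))
            ((hST _ hmem).trans (mul_le_mul_of_nonneg_left
              (pow_apply_le_of_forall_apply_le p hcS hS k x) hδ))
      _ = δ * p x * ∑ l ∈ range (k + 1), cT ^ (k + 1 - 1 - l) * cS ^ l := by
          rw [Nat.add_sub_cancel, hsum]; ring

theorem map_apply_sub_compression_apply_le {S P : Module.End R M} {s : Set M}
    (hs : Set.MapsTo S s s) {ε cS cP : ℝ} (hε : 0 ≤ ε) (hcP : 0 ≤ cP)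
    (hP : ∀ w ∈ s, p (w - P w) ≤ ε * p w) (hS : ∀ y, p (S y) ≤ cS * p y)
    (hPS : ∀ y, p ((P * S) y) ≤ cP * p y) {w : M} (hw : w ∈ s) :
    p (S w - (P * S * P) w) ≤ ε * (cS + cP) * p w := by
  have hsplit : S w - (P * S * P) w = (S w - P (S w)) + (P * S) (w - P w) := by
    simp only [Module.End.mul_apply, map_sub]
    abel
  calc p (S w - (P * S * P) w) ≤ p (S w - P (S w)) + p ((P * S) (w - P w)) := by
        rw [hsplit]; exact map_add_le_add p _ _
    _ ≤ ε * (cS * p w) + cP * (ε * p w) :=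
        add_le_add ((hP _ (hs hw)).trans (mul_le_mul_of_nonneg_left (hS w) hε))
          ((hPS _).trans (mul_le_mul_of_nonneg_left (hP w hw) hcP))
    _ = ε * (cS + cP) * p w := by ring

theorem map_pow_apply_sub_compression_pow_apply_le {S P : Module.End R M} {s : Set M}
    (hs : Set.MapsTo S s s) {ε cS cP cT : ℝ} (hcS : 0 ≤ cS) (hcP : 0 ≤ cP) (hcT : 0 ≤ cT)
    (hP : ∀ w ∈ s, p (w - P w) ≤ ε * p w) (hS : ∀ y, p (S y) ≤ cS * p y)
    (hPS : ∀ y, p ((P * S) y) ≤ cP * p y) (hT : ∀ y, p ((P * S * P) y) ≤ cT * p y)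
    {x : M} (hx : x ∈ s) (k : ℕ) :
    p ((S ^ k) x - ((P * S * P) ^ k) x)
      ≤ ε * p x * (cS + cP) * ∑ l ∈ range k, cT ^ (k - 1 - l) * cS ^ l := by
  rcases (apply_nonneg p x).eq_or_lt with hx0 | hxpos
  · calc p ((S ^ k) x - ((P * S * P) ^ k) x)
        ≤ p ((S ^ k) x) + p (((P * S * P) ^ k) x) := map_sub_le_add p _ _
      _ ≤ cS ^ k * p x + cT ^ k * p x :=
          add_le_add (pow_apply_le_of_forall_apply_le p hcS hS k x)
            (pow_apply_le_of_forall_apply_le p hcT hT k x)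
      _ = ε * p x * (cS + cP) * ∑ l ∈ range k, cT ^ (k - 1 - l) * cS ^ l := by
          rw [← hx0]; ring
  · have hε : 0 ≤ ε := nonneg_of_mul_nonneg_left ((apply_nonneg p _).trans (hP x hx)) hxpos
    calc p ((S ^ k) x - ((P * S * P) ^ k) x)
        ≤ ε * (cS + cP) * p x * ∑ l ∈ range k, cT ^ (k - 1 - l) * cS ^ l :=
          map_pow_apply_sub_pow_apply_le p hs hcS hcT (by positivity) hS hT
            (fun w hw => map_apply_sub_compression_apply_le p hs hε hcP hP hS hPS hw) hx k
      _ = ε * p x * (cS + cP) * ∑ l ∈ range k, cT ^ (k - 1 - l) * cS ^ l := by ring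

end SeminormBounds

theorem Matrix.PosSemidef.transpose_sqrt {n : Type*} [Fintype n] [DecidableEq n]
    {A : Matrix n n ℝ} (hA : A.PosSemidef) : hA.sqrtᵀ = hA.sqrt := by
  simp [Matrix.PosSemidef.sqrt, transpose_mul, Matrix.mul_assoc, star_eq_conjTranspose,
    conjTranspose_eq_transpose_of_trivial]

theorem Matrix.PosSemidef.sqrt_mul_self {n : Type*} [Fintype n] [DecidableEq n]
    {A : Matrix n n ℝ} (hA : A.PosSemidef) : hA.sqrt * hA.sqrt = A := by
  set U : Matrix n n ℝ := (hA.1.eigenvectorUnitary : Matrix n n ℝ)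
  set D : Matrix n n ℝ := diagonal ((↑) ∘ (√·) ∘ hA.1.eigenvalues)
  have hU : star U * U = 1 := Unitary.coe_star_mul_self _
  have hD : D * D = diagonal ((↑) ∘ hA.1.eigenvalues) := by
    simp [D, diagonal_mul_diagonal, Real.mul_self_sqrt (hA.eigenvalues_nonneg _)]
  calc hA.sqrt * hA.sqrt = U * (D * (star U * U) * D) * star U := by
        simp only [Matrix.PosSemidef.sqrt, U, D, Matrix.mul_assoc]
    _ = A := by
        rw [hU, Matrix.mul_one, hD]
        conv_rhs => rw [hA.1.spectral_theorem, Unitary.conjStarAlgAut_apply]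
        rfl

theorem opNorm_nonneg {N : ℕ} (B : Matrix (Fin N) (Fin N) ℝ) : 0 ≤ opNorm B :=
  norm_nonneg _

theorem norm_toLp_mulVec_le {N : ℕ} (B : Matrix (Fin N) (Fin N) ℝ) (v : Fin N → ℝ) :
    ‖WithLp.toLp 2 (B *ᵥ v)‖ ≤ opNorm B * ‖WithLp.toLp 2 v‖ :=
  (toEuclideanCLM (𝕜 := ℝ) (n := Fin N) B).le_opNorm (WithLp.toLp 2 v)

theorem lnorm_eq_norm_toLp_mulVec {N : ℕ} {A L : Matrix (Fin N) (Fin N) ℝ} (hA : Aᵀ * A = L)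
    (v : Fin N → ℝ) : lnorm L v = ‖WithLp.toLp 2 (A *ᵥ v)‖ := by
  rw [lnorm, EuclideanSpace.norm_eq, ← hA, ← mulVec_mulVec, dotProduct_mulVec, vecMul_transpose]
  simp [dotProduct, sq]

def mulVecSeminorm {N : ℕ} (A : Matrix (Fin N) (Fin N) ℝ) : Seminorm ℝ (Fin N → ℝ) :=
  (normSeminorm ℝ (EuclideanSpace ℝ (Fin N))).comp
    ((WithLp.linearEquiv 2 ℝ (Fin N → ℝ)).symm.toLinearMap ∘ₗ A.mulVecLin)

theorem lnorm_eq_mulVecSeminorm {N : ℕ} {A L : Matrix (Fin N) (Fin N) ℝ} (hA : Aᵀ * A = L)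
    (v : Fin N → ℝ) : lnorm L v = mulVecSeminorm A v :=
  lnorm_eq_norm_toLp_mulVec hA v

theorem lnorm_mulVec_le {N : ℕ} {A B L Lplus M : Matrix (Fin N) (Fin N) ℝ}
    (hA : Aᵀ * A = L) (hB : B * B = Lplus) (hBt : Bᵀ = B) (hLplus : L * Lplus * L = L)
    (hM : ∀ x : Fin N → ℝ, L *ᵥ x = 0 → L *ᵥ (M *ᵥ x) = 0) (y : Fin N → ℝ) :
    lnorm L (M *ᵥ y) ≤ opNorm (A * M * B) * lnorm L y := by
  have hLt : Lᵀ = L := by rw [← hA, transpose_mul, transpose_transpose]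
  have hBL : (B * L)ᵀ * (B * L) = L := by
    rw [transpose_mul, hBt, hLt, Matrix.mul_assoc, ← Matrix.mul_assoc B, hB, ← Matrix.mul_assoc,
      hLplus]
  have hker : ∀ v, L *ᵥ v = 0 → A *ᵥ v = 0 := fun v hv => by
    have h : lnorm L v = 0 := by rw [lnorm, hv, dotProduct_zero, Real.sqrt_zero]
    rw [lnorm_eq_norm_toLp_mulVec hA, norm_eq_zero] at h
    simpa using h
  -- `y - L⁺ L y` lies in `ker L`, which `M` preserves and `A` annihilates
  have hfactor : A *ᵥ (M *ᵥ y) = (A * M * B) *ᵥ ((B * L) *ᵥ y) := by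
    have h := hker _ (hM (y - (Lplus * L) *ᵥ y) (by
      rw [mulVec_sub, mulVec_mulVec, ← Matrix.mul_assoc, hLplus, sub_self]))
    rw [mulVec_sub, mulVec_sub, sub_eq_zero] at h
    rw [h, ← hB]
    simp only [mulVec_mulVec, Matrix.mul_assoc]
  calc lnorm L (M *ᵥ y) = ‖WithLp.toLp 2 ((A * M * B) *ᵥ ((B * L) *ᵥ y))‖ := by
        rw [lnorm_eq_norm_toLp_mulVec hA, hfactor]
    _ ≤ opNorm (A * M * B) * ‖WithLp.toLp 2 ((B * L) *ᵥ y)‖ := norm_toLp_mulVec_le _ _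
    _ = opNorm (A * M * B) * lnorm L y := by rw [lnorm_eq_norm_toLp_mulVec hBL]

theorem stmt_10_general {N : ℕ} (L S Pr : Matrix (Fin N) (Fin N) ℝ)
    (hL : L.PosSemidef)
    (Lplus : Matrix (Fin N) (Fin N) ℝ) (hLplusMP : IsMoorePenrose L Lplus)
    (hLplus : Lplus.PosSemidef)
    (hkerPr : ∀ x : Fin N → ℝ, L *ᵥ x = 0 → L *ᵥ (Pr *ᵥ x) = 0)
    (hkerS : ∀ x : Fin N → ℝ, L *ᵥ x = 0 → L *ᵥ (S *ᵥ x) = 0)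
    (R : Submodule ℝ (Fin N → ℝ))
    (hSR : ∀ x ∈ R, S *ᵥ x ∈ R)
    (ε : ℝ) (hε : ∀ x ∈ R, lnorm L (x - Pr *ᵥ x) ≤ ε * lnorm L x)
    (k : ℕ) :
    ∀ x ∈ R,
      lnorm L ((S ^ k) *ᵥ x - ((Pr * S * Pr) ^ k) *ᵥ x)
        ≤ ε * lnorm L x *
            (opNorm (hL.sqrt * S * hLplus.sqrt) +
              opNorm (hL.sqrt * (Pr * S) * hLplus.sqrt)) *
            ∑ l ∈ Finset.range k,
              opNorm (hL.sqrt * (Pr * S * Pr) * hLplus.sqrt) ^ (k - 1 - l) *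
                opNorm (hL.sqrt * S * hLplus.sqrt) ^ l := by
  intro x hx
  have hA : hL.sqrtᵀ * hL.sqrt = L := by rw [hL.transpose_sqrt, hL.sqrt_mul_self]
  have hp := lnorm_eq_mulVecSeminorm hA
  have hbound (M : Matrix (Fin N) (Fin N) ℝ) (hM : ∀ v, L *ᵥ v = 0 → L *ᵥ (M *ᵥ v) = 0)
      (y : Fin N → ℝ) : mulVecSeminorm hL.sqrt (toLinAlgEquiv' M y)
        ≤ opNorm (hL.sqrt * M * hLplus.sqrt) * mulVecSeminorm hL.sqrt y := by
    simpa only [toLinAlgEquiv'_apply, hp] using lnorm_mulVec_le hA hLplus.sqrt_mul_self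
      hLplus.transpose_sqrt hLplusMP.1 hM y
  have hkerPS : ∀ v, L *ᵥ v = 0 → L *ᵥ ((Pr * S) *ᵥ v) = 0 := fun v hv => by
    simpa only [← mulVec_mulVec] using hkerPr _ (hkerS v hv)
  have hkerPSP : ∀ v, L *ᵥ v = 0 → L *ᵥ ((Pr * S * Pr) *ᵥ v) = 0 := fun v hv => by
    simpa only [← mulVec_mulVec] using hkerPS _ (hkerPr v hv)
  have hPS := hbound _ hkerPS
  have hPSP := hbound _ hkerPSP
  simp only [map_mul] at hPS hPSP
  have key := map_pow_apply_sub_compression_pow_apply_le (mulVecSeminorm hL.sqrt)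
    (S := toLinAlgEquiv' S) (P := toLinAlgEquiv' Pr) (s := R) hSR (opNorm_nonneg _)
    (opNorm_nonneg _) (opNorm_nonneg _)
    (fun w hw => by simpa only [toLinAlgEquiv'_apply, hp] using hε w hw)
    (hbound S hkerS) hPS hPSP hx k
  simpa only [hp, ← map_mul, ← map_pow, toLinAlgEquiv'_apply] using key

theorem stmt_10 {N : ℕ} (L S Pr : Matrix (Fin N) (Fin N) ℝ)
    (hL : L.PosSemidef)
    (Lplus : Matrix (Fin N) (Fin N) ℝ) (hLplusMP : IsMoorePenrose L Lplus)
    (hLplus : Lplus.PosSemidef)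
    -- `Pr` is an orthogonal projector (`Π`)
    (hproj : Pr * Pr = Pr) (hsym : Prᵀ = Pr)
    (hkerPr : ∀ x : Fin N → ℝ, L *ᵥ x = 0 → L *ᵥ (Pr *ᵥ x) = 0)
    (hkerS : ∀ x : Fin N → ℝ, L *ᵥ x = 0 → L *ᵥ (S *ᵥ x) = 0)
    (R : Submodule ℝ (Fin N → ℝ))
    (hSR : ∀ x ∈ R, S *ᵥ x ∈ R)
    (ε : ℝ) (hε : ∀ x ∈ R, lnorm L (x - Pr *ᵥ x) ≤ ε * lnorm L x)
    (k : ℕ) (hk : 1 ≤ k) :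
    ∀ x ∈ R,
      lnorm L ((S ^ k) *ᵥ x - ((Pr * S * Pr) ^ k) *ᵥ x)
        ≤ ε * lnorm L x *
            (opNorm (hL.sqrt * S * hLplus.sqrt) +
              opNorm (hL.sqrt * (Pr * S) * hLplus.sqrt)) *
            ∑ l ∈ Finset.range k,
              opNorm (hL.sqrt * (Pr * S * Pr) * hLplus.sqrt) ^ (k - 1 - l) *
                opNorm (hL.sqrt * S * hLplus.sqrt) ^ l :=
  stmt_10_general L S Pr hL Lplus hLplusMP hLplus hkerPr hkerS R hSR ε hε k
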